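/- With C(τ)_J = [[C_{J₁}, τ C_{J₁J₂}],[τ C_{J₂J₁}, C_{J₂}]] for nonempty J₁, J₂, one has det(C(τ)_J) = det(C_{J₁}) det(C_{J₂}) ∏_{i=1}^{|J₁|} (1 − τ² μᵢ), where μᵢ ∈ [0,1] are the eigenvalues of C_{J₁}^{−1/2} C_{J₁J₂} C_{J₂}^{−1} C_{J₂J₁} C_{J₁}^{−1/2}. -/

import Mathlib

/-! Expanding around the invertible block `C₂₂` (Schur complement) gives
`det C(τ) = det C₂₂ · det (C₁₁ - τ² X)` with `X = C₁₂ C₂₂⁻¹ C₂₁`. Writing `C₁₁ = S S`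
with `S = C₁₁^{1/2}` and `M = S⁻¹ X S⁻¹`, one has `C₁₁ - τ² X = S (1 - τ² M) S`, and
diagonalising the symmetric matrix `M` produces the product.
Since `C₂₁ = C₁₂ᵀ`, `M = (S⁻¹ C₁₂) C₂₂⁻¹ (S⁻¹ C₁₂)ᵀ` is positive semidefinite, and
`1 - M = S⁻¹ (C₁₁ - X) S⁻¹` is positive semidefinite because the Schur complement `C₁₁ - X`
of the positive definite block matrix is; hence `0 ≤ μᵢ ≤ 1`. -/

open Matrix

namespace Matrix.PosSemidef

open scoped ComplexOrder

/-- The positive semidefinite square root of a positive semidefinite matrix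
(the definition of the older Mathlib, removed since). -/
noncomputable def sqrt {n : Type*} [Fintype n] [DecidableEq n] {𝕜 : Type*} [RCLike 𝕜]
    {A : Matrix n n 𝕜} (hA : PosSemidef A) : Matrix n n 𝕜 :=
  hA.1.eigenvectorUnitary.1 * diagonal ((↑) ∘ Real.sqrt ∘ hA.1.eigenvalues) *
  (star hA.1.eigenvectorUnitary : Matrix n n 𝕜)

end Matrix.PosSemidef

namespace Matrix

open scoped ComplexOrder

variable {n : Type*} [Fintype n] [DecidableEq n] {𝕜 : Type*} [RCLike 𝕜]

namespace PosSemidef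

theorem sqrt_eq_conjStarAlgAut {A : Matrix n n 𝕜} (hA : A.PosSemidef) :
    hA.sqrt = Unitary.conjStarAlgAut 𝕜 _ hA.1.eigenvectorUnitary
      (diagonal ((↑) ∘ Real.sqrt ∘ hA.1.eigenvalues)) :=
  rfl

theorem sqrt_mul_self {A : Matrix n n 𝕜} (hA : A.PosSemidef) : hA.sqrt * hA.sqrt = A := by
  conv_rhs => rw [hA.1.spectral_theorem]
  rw [sqrt_eq_conjStarAlgAut, ← map_mul, diagonal_mul_diagonal]
  congr 2
  ext i
  simp [← RCLike.ofReal_mul, Real.mul_self_sqrt (hA.eigenvalues_nonneg i)]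

theorem isHermitian_sqrt {A : Matrix n n 𝕜} (hA : A.PosSemidef) : hA.sqrt.IsHermitian := by
  rw [sqrt_eq_conjStarAlgAut, IsHermitian, ← star_eq_conjTranspose, ← map_star]
  congr 1
  simp [star_eq_conjTranspose, diagonal_conjTranspose]

end PosSemidef

theorem PosDef.isUnit_det_sqrt {A : Matrix n n 𝕜} (hA : A.PosDef) :
    IsUnit hA.posSemidef.sqrt.det := by
  have h := (isUnit_iff_isUnit_det A).mp hA.isUnit
  rw [← hA.posSemidef.sqrt_mul_self, det_mul] at h
  exact isUnit_of_mul_isUnit_left h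

theorem IsHermitian.eigenvalues_le_of_posSemidef_sub {A : Matrix n n 𝕜} (hA : A.IsHermitian)
    {c : ℝ} (h : (c • 1 - A).PosSemidef) (i : n) : hA.eigenvalues i ≤ c := by
  set v : n → 𝕜 := ⇑(hA.eigenvectorBasis i)
  have hv : star v ⬝ᵥ v = 1 := by
    rw [dotProduct_comm, ← EuclideanSpace.inner_eq_star_dotProduct, inner_self_eq_norm_sq_to_K,
      hA.eigenvectorBasis.orthonormal.1 i, RCLike.ofReal_one, one_pow]
  have := h.dotProduct_mulVec_nonneg v
  rw [sub_mulVec, hA.mulVec_eigenvectorBasis i, smul_mulVec, one_mulVec, ← sub_smul,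
    dotProduct_smul, hv, RCLike.real_smul_eq_coe_mul, mul_one, RCLike.ofReal_nonneg] at this
  exact sub_nonneg.mp this

theorem IsHermitian.det_one_sub_smul {A : Matrix n n 𝕜} (hA : A.IsHermitian) (c : 𝕜) :
    (1 - c • A).det = ∏ i, (1 - c * hA.eigenvalues i) := by
  conv_lhs => rw [hA.spectral_theorem, ← map_smul,
    ← map_one (Unitary.conjStarAlgAut 𝕜 _ hA.eigenvectorUnitary), ← map_sub]
  rw [Unitary.conjStarAlgAut_apply, det_conj_of_mul_eq_one (Unitary.coe_mul_star_self _)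
    (Unitary.coe_star_mul_self _), ← diagonal_one, ← diagonal_smul, diagonal_sub, det_diagonal]
  rfl

theorem PosSemidef.one_sub_inv_mul_mul_inv {S X : Matrix n n 𝕜} (hS : S.IsHermitian)
    (hSu : IsUnit S.det) (h : (S * S - X).PosSemidef) : (1 - S⁻¹ * X * S⁻¹).PosSemidef := by
  have key : S⁻¹ * (S * S - X) * S⁻¹ᴴ = 1 - S⁻¹ * X * S⁻¹ := by
    rw [hS.inv.eq, Matrix.mul_sub, Matrix.sub_mul, ← Matrix.mul_assoc,
      nonsing_inv_mul _ hSu, Matrix.one_mul, mul_nonsing_inv _ hSu]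
  exact key ▸ h.mul_mul_conjTranspose_same S⁻¹

section CommRing

variable {m R : Type*} [Fintype m] [DecidableEq m] [CommRing R]

theorem det_fromBlocks_smul_smul (A : Matrix m m R) (B : Matrix m n R) (C : Matrix n m R)
    (D : Matrix n n R) [Invertible D] (t : R) :
    (fromBlocks A (t • B) (t • C) D).det = D.det * (A - t ^ 2 • (B * D⁻¹ * C)).det := by
  rw [det_fromBlocks₂₂, invOf_eq_nonsing_inv, Matrix.smul_mul, Matrix.smul_mul, Matrix.mul_smul,
    smul_smul, sq]

theorem det_mul_self_sub_smul {S : Matrix n n R} (hS : IsUnit S.det) (X : Matrix n n R) (t : R) :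
    (S * S - t • X).det = S.det ^ 2 * (1 - t • (S⁻¹ * X * S⁻¹)).det := by
  have hconj : S * S - t • X = S * (1 - t • (S⁻¹ * X * S⁻¹)) * S := by
    simp only [Matrix.mul_sub, Matrix.sub_mul, Matrix.mul_one, Matrix.mul_smul, Matrix.smul_mul,
      Matrix.mul_assoc, nonsing_inv_mul _ hS, mul_nonsing_inv_cancel_left _ _ hS]
  rw [hconj, det_mul, det_mul]
  ring

end CommRing

end Matrix

theorem stmt_11_general {m k : ℕ}
    (C₁₁ : Matrix (Fin m) (Fin m) ℝ) (C₁₂ : Matrix (Fin m) (Fin k) ℝ)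
    (C₂₁ : Matrix (Fin k) (Fin m) ℝ) (C₂₂ : Matrix (Fin k) (Fin k) ℝ)
    (hC : (Matrix.fromBlocks C₁₁ C₁₂ C₂₁ C₂₂).PosDef)
    (h₁₁ : C₁₁.PosDef)
    (hM : (h₁₁.posSemidef.sqrt⁻¹ * C₁₂ * C₂₂⁻¹ * C₂₁ *
      h₁₁.posSemidef.sqrt⁻¹).IsHermitian) :
    (∀ i, hM.eigenvalues i ∈ Set.Icc (0 : ℝ) 1) ∧
    ∀ τ : ℝ,
      (Matrix.fromBlocks C₁₁ (τ • C₁₂) (τ • C₂₁) C₂₂).det =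
        C₁₁.det * C₂₂.det * ∏ i, (1 - τ ^ 2 * hM.eigenvalues i) := by
  obtain rfl : C₂₁ = C₁₂ᴴ := (isHermitian_fromBlocks_iff.mp hC.1).2.1.symm
  set S := h₁₁.posSemidef.sqrt
  have hSS : S * S = C₁₁ := h₁₁.posSemidef.sqrt_mul_self
  have hS : IsUnit S.det := h₁₁.isUnit_det_sqrt
  have hS_herm : S.IsHermitian := h₁₁.posSemidef.isHermitian_sqrt
  have h₂₂ : C₂₂.PosDef := hC.submatrix Sum.inr_injective
  have := h₂₂.isUnit.invertible
  have hM_assoc : S⁻¹ * C₁₂ * C₂₂⁻¹ * C₁₂ᴴ * S⁻¹ = S⁻¹ * (C₁₂ * C₂₂⁻¹ * C₁₂ᴴ) * S⁻¹ := by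
    simp only [Matrix.mul_assoc]
  refine ⟨fun i => ⟨?_, ?_⟩, fun τ => ?_⟩
  · have hM_psd : (S⁻¹ * C₁₂ * C₂₂⁻¹ * C₁₂ᴴ * S⁻¹).PosSemidef := by
      have := h₂₂.inv.posSemidef.mul_mul_conjTranspose_same (S⁻¹ * C₁₂)
      rwa [conjTranspose_mul, hS_herm.inv.eq, ← Matrix.mul_assoc] at this
    exact hM_psd.eigenvalues_nonneg i
  · have hSchur := (PosDef.fromBlocks₂₂ C₁₁ C₁₂ h₂₂).mp hC.posSemidef
    rw [← hSS] at hSchur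
    refine hM.eigenvalues_le_of_posSemidef_sub ?_ i
    rw [one_smul, hM_assoc]
    exact hSchur.one_sub_inv_mul_mul_inv hS_herm hS
  · have hdetS : C₁₁.det = S.det ^ 2 := by rw [← hSS, det_mul, sq]
    calc _ = C₂₂.det * (S * S - τ ^ 2 • (C₁₂ * C₂₂⁻¹ * C₁₂ᴴ)).det := by
          rw [det_fromBlocks_smul_smul, hSS]
      _ = _ := by
          rw [det_mul_self_sub_smul hS, ← hM_assoc, hM.det_one_sub_smul, hdetS]
          simp only [RCLike.ofReal_real_eq_id, id]
          ring

/-- For a symmetric positive definite matrix with blocks `C₁₁, C₁₂, C₂₁, C₂₂` (indexed by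
two disjoint nonempty index sets), `det(C(τ)) = det C₁₁ · det C₂₂ · ∏ᵢ (1 - τ² μᵢ)`, where
`μᵢ ∈ [0,1]` are the eigenvalues of `C₁₁^{-1/2} C₁₂ C₂₂⁻¹ C₂₁ C₁₁^{-1/2}`. -/
theorem stmt_11 {m k : ℕ} (hm : 0 < m) (hk : 0 < k)
    (C₁₁ : Matrix (Fin m) (Fin m) ℝ) (C₁₂ : Matrix (Fin m) (Fin k) ℝ)
    (C₂₁ : Matrix (Fin k) (Fin m) ℝ) (C₂₂ : Matrix (Fin k) (Fin k) ℝ)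
    (hC : (Matrix.fromBlocks C₁₁ C₁₂ C₂₁ C₂₂).PosDef)
    (hsymm : (Matrix.fromBlocks C₁₁ C₁₂ C₂₁ C₂₂).IsSymm)
    (h₁₁ : C₁₁.PosDef)
    (hM : (h₁₁.posSemidef.sqrt⁻¹ * C₁₂ * C₂₂⁻¹ * C₂₁ *
      h₁₁.posSemidef.sqrt⁻¹).IsHermitian) :
    (∀ i, hM.eigenvalues i ∈ Set.Icc (0 : ℝ) 1) ∧
    ∀ τ : ℝ,
      (Matrix.fromBlocks C₁₁ (τ • C₁₂) (τ • C₂₁) C₂₂).det =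
        C₁₁.det * C₂₂.det * ∏ i, (1 - τ ^ 2 * hM.eigenvalues i) :=
  stmt_11_general C₁₁ C₁₂ C₂₁ C₂₂ hC h₁₁ hM
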